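/- arXiv:1309.3866 — 2 statements merged into one kernel-verified Lean document; each statement's English description precedes it below -/
import Mathlib

section
/- If the norm of a Banach space X is octahedral, then every convex combination of weak-star slices of the closed unit ball of X* has diameter 2. -/
open scoped BigOperators
open Metric

noncomputable section

/-- The norm of `X` is octahedral. -/
def IsOctahedral (X : Type*) [NormedAddCommGroup X] [NormedSpace ℝ X] : Prop :=
  ∀ ε : ℝ, 0 < ε → ∀ Y : Subspace ℝ X, FiniteDimensional ℝ Y →
    ∃ x : X, ‖x‖ = 1 ∧ ∀ y ∈ Y, ∀ l : ℝ, (1 - ε) * (‖y‖ + |l|) ≤ ‖y + l • x‖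

/-- The weak-star slice of the dual unit ball determined by `x` and `α`. -/
def wSlice {X : Type*} [NormedAddCommGroup X] [NormedSpace ℝ X] (x : X) (α : ℝ) :
    Set (StrongDual ℝ X) :=
  {f | ‖f‖ ≤ 1 ∧ 1 - α < f x}

/-- The convex combination `∑ lam i • S i` of sets. -/
def ccomb {E : Type*} [AddCommMonoid E] [Module ℝ E] {n : ℕ}
    (lam : Fin n → ℝ) (S : Fin n → Set E) : Set E :=
  {y | ∃ f : Fin n → E, (∀ i, f i ∈ S i) ∧ y = ∑ i, lam i • f i}

/-! Given finitely many unit vectors `xᵢ` and `δ > 0`, octahedrality yields a unit vector `z`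
with `‖xᵢ ± z‖ ≥ 2 - 2δ`. A norming functional of `xᵢ + z` then lies in the `i`-th slice and is
almost `1` at `z`; a norming functional of `xᵢ - z` lies in the same slice and is almost `-1` at `z`. Combining
them with the weights `λᵢ` gives two points of the convex combination whose difference is almost
`2` at `z`. -/

section

variable {X : Type*} [NormedAddCommGroup X] [NormedSpace ℝ X]

theorem ccomb_subset_of_convex {E : Type*} [AddCommGroup E] [Module ℝ E] {n : ℕ}
    {lam : Fin n → ℝ} (hlam : ∀ i, 0 ≤ lam i) (hsum : ∑ i, lam i = 1)
    {S : Fin n → Set E} {K : Set E} (hK : Convex ℝ K) (hS : ∀ i, S i ⊆ K) :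
    ccomb lam S ⊆ K := by
  rintro _ ⟨f, hf, rfl⟩
  exact hK.sum_mem (fun i _ => hlam i) hsum fun i _ => hS i (hf i)

theorem wSlice_subset_closedBall (x : X) (α : ℝ) : wSlice x α ⊆ closedBall 0 1 :=
  fun _ hf => mem_closedBall_zero_iff.2 hf.1

theorem IsOctahedral.exists_forall_norm_add_smul_ge (hoct : IsOctahedral X) {ι : Type*}
    [Finite ι] (v : ι → X) {δ : ℝ} (hδ : 0 < δ) :
    ∃ z : X, ‖z‖ = 1 ∧ ∀ i, ∀ l : ℝ, (1 - δ) * (‖v i‖ + |l|) ≤ ‖v i + l • z‖ := by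
  obtain ⟨z, hz, hzY⟩ := hoct δ hδ (Submodule.span ℝ (Set.range v))
    (FiniteDimensional.span_of_finite ℝ (Set.finite_range v))
  exact ⟨z, hz, fun i => hzY (v i) (Submodule.subset_span (Set.mem_range_self i))⟩

theorem exists_dual_sub_one_le_apply_of_norm_add {x z : X} (hx : ‖x‖ ≤ 1) (hz : ‖z‖ ≤ 1) :
    ∃ f : StrongDual ℝ X, ‖f‖ ≤ 1 ∧ ‖x + z‖ - 1 ≤ f x ∧ ‖x + z‖ - 1 ≤ f z := by
  obtain ⟨f, hf, hfxz⟩ := exists_dual_vector'' ℝ (x + z)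
  have hfx : f x ≤ 1 := (Real.le_norm_self _).trans ((f.unit_le_opNorm x hx).trans hf)
  have hfz : f z ≤ 1 := (Real.le_norm_self _).trans ((f.unit_le_opNorm z hz).trans hf)
  replace hfxz : f x + f z = ‖x + z‖ := by simpa using hfxz
  exact ⟨f, hf, by linarith, by linarith⟩

theorem exists_pos_lt_forall_lt_of_finite {ι : Type*} [Finite ι] {b : ℝ} (hb : 0 < b)
    (a : ι → ℝ) (ha : ∀ i, 0 < a i) : ∃ δ : ℝ, 0 < δ ∧ δ < b ∧ ∀ i, δ < a i := by
  have h : ∀ᶠ δ in nhdsWithin (0 : ℝ) (Set.Ioi 0), 0 < δ ∧ δ < b ∧ ∀ i, δ < a i :=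
    (eventually_nhdsWithin_of_forall fun _ h => h).and <| nhdsWithin_le_nhds <|
      (eventually_lt_nhds hb).and (Filter.eventually_all.2 fun i => eventually_lt_nhds (ha i))
  exact h.exists

variable {n : ℕ} {lam : Fin n → ℝ} {x : Fin n → X} {α : Fin n → ℝ}

theorem ccomb_wSlice_subset_closedBall (hlam : ∀ i, 0 ≤ lam i) (hsum : ∑ i, lam i = 1) :
    ccomb lam (fun i => wSlice (x i) (α i)) ⊆ closedBall 0 1 :=
  ccomb_subset_of_convex hlam hsum (convex_closedBall 0 1) fun _ => wSlice_subset_closedBall _ _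

theorem IsOctahedral.exists_mem_ccomb_wSlice_two_sub_le_norm_sub (hoct : IsOctahedral X)
    (hlam : ∀ i, 0 ≤ lam i) (hsum : ∑ i, lam i = 1) (hx : ∀ i, ‖x i‖ = 1)
    (hα : ∀ i, 0 < α i) {ε : ℝ} (hε : 0 < ε) :
    ∃ a ∈ ccomb lam (fun i => wSlice (x i) (α i)),
      ∃ b ∈ ccomb lam (fun i => wSlice (x i) (α i)), 2 - ε ≤ ‖a - b‖ := by
  obtain ⟨δ, hδ, hδε, hδα⟩ :=
    exists_pos_lt_forall_lt_of_finite (by positivity : 0 < ε / 4) (α · / 2) fun i => by simp [hα]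
  obtain ⟨z, hz, hxz⟩ := hoct.exists_forall_norm_add_smul_ge x hδ
  have hunit i (l : ℝ) (hl : |l| = 1) : 2 * (1 - δ) ≤ ‖x i + l • z‖ := by
    have h := hxz i l
    rw [hx, hl] at h
    linarith
  have hplus i : 2 * (1 - δ) ≤ ‖x i + z‖ := one_smul ℝ z ▸ hunit i 1 abs_one
  have hminus i : 2 * (1 - δ) ≤ ‖x i + -z‖ := neg_one_smul ℝ z ▸ hunit i (-1) (by simp)
  choose F hF hFx hFz using fun i =>
    exists_dual_sub_one_le_apply_of_norm_add (hx i).le hz.le (z := z)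
  choose G hG hGx hGz using fun i =>
    exists_dual_sub_one_le_apply_of_norm_add (hx i).le (norm_neg z ▸ hz.le) (z := -z)
  have hslice i : 1 - α i < 1 - 2 * δ := by linarith [hδα i]
  refine ⟨∑ i, lam i • F i, ⟨F, fun i => ⟨hF i, ?_⟩, rfl⟩,
    ∑ i, lam i • G i, ⟨G, fun i => ⟨hG i, ?_⟩, rfl⟩, ?_⟩
  · linarith [hplus i, hFx i, hslice i]
  · linarith [hminus i, hGx i, hslice i]
  have hFG i : 2 - 4 * δ ≤ F i z - G i z := by
    linarith [hplus i, hminus i, hFz i, hGz i, map_neg (G i) z]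
  calc 2 - ε ≤ ∑ i, lam i * (2 - 4 * δ) := by rw [← Finset.sum_mul, hsum]; linarith
    _ ≤ ∑ i, lam i * (F i z - G i z) :=
      Finset.sum_le_sum fun i _ => mul_le_mul_of_nonneg_left (hFG i) (hlam i)
    _ = (∑ i, lam i • F i - ∑ i, lam i • G i) z := by
      simp [mul_sub, Finset.sum_sub_distrib]
    _ ≤ ‖∑ i, lam i • F i - ∑ i, lam i • G i‖ :=
      (Real.le_norm_self _).trans (ContinuousLinearMap.unit_le_opNorm _ z hz.le)

end

theorem octahedral_implies_ccomb_wSlices_diam_two_general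
    (X : Type*) [NormedAddCommGroup X] [NormedSpace ℝ X]
    (hoct : IsOctahedral X)
    (n : ℕ) (lam : Fin n → ℝ) (hlam : ∀ i, 0 < lam i) (hsum : ∑ i, lam i = 1)
    (x : Fin n → X) (hx : ∀ i, ‖x i‖ = 1)
    (α : Fin n → ℝ) (hα : ∀ i, α i ∈ Set.Ioo (0 : ℝ) 1) :
    Metric.diam (ccomb lam (fun i => wSlice (x i) (α i))) = 2 := by
  have hball := ccomb_wSlice_subset_closedBall (x := x) (α := α) (fun i => (hlam i).le) hsum
  have hbdd := isBounded_closedBall.subset hball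
  refine le_antisymm ((diam_mono hball isBounded_closedBall).trans ?_) ?_
  · simpa using diam_closedBall (x := (0 : StrongDual ℝ X)) zero_le_one
  refine le_of_forall_pos_le_add fun ε hε => ?_
  obtain ⟨a, ha, b, hb, hab⟩ := hoct.exists_mem_ccomb_wSlice_two_sub_le_norm_sub
    (fun i => (hlam i).le) hsum hx (fun i => (hα i).1) hε
  linarith [dist_eq_norm a b ▸ dist_le_diam_of_mem hbdd ha hb]

theorem octahedral_implies_ccomb_wSlices_diam_two
    (X : Type*) [NormedAddCommGroup X] [NormedSpace ℝ X] [CompleteSpace X]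
    (hoct : IsOctahedral X)
    (n : ℕ) (lam : Fin n → ℝ) (hlam : ∀ i, 0 < lam i) (hsum : ∑ i, lam i = 1)
    (x : Fin n → X) (hx : ∀ i, ‖x i‖ = 1)
    (α : Fin n → ℝ) (hα : ∀ i, α i ∈ Set.Ioo (0 : ℝ) 1) :
    Metric.diam (ccomb lam (fun i => wSlice (x i) (α i))) = 2 :=
  octahedral_implies_ccomb_wSlices_diam_two_general X hoct n lam hlam hsum x hx α hα
end
end

section
/- For a Banach space X, every convex combination of slices of the unit ball B_X has diameter 2 if and only if every convex combination of weak-star slices of B_{X**} has diameter 2. -/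
open scoped BigOperators
open Metric

noncomputable section

/-- The slice of the unit ball of `X` determined by `f ∈ S_{X*}` and `α`. -/
def ballSlice {X : Type*} [NormedAddCommGroup X] [NormedSpace ℝ X]
    (f : StrongDual ℝ X) (α : ℝ) : Set X :=
  {x | ‖x‖ ≤ 1 ∧ 1 - α < f x}

/-- The weak-star slice of the bidual unit ball determined by `f ∈ S_{X*}` and `α`. -/
def biSlice {X : Type*} [NormedAddCommGroup X] [NormedSpace ℝ X]
    (f : StrongDual ℝ X) (α : ℝ) :
    Set (StrongDual ℝ (StrongDual ℝ X)) :=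
  {F | ‖F‖ ≤ 1 ∧ 1 - α < F f}

/-!
The canonical embedding `X → X**` is an isometry mapping each slice `S(f, α)` into the
weak-star slice cut by `f` at the same depth, which gives one direction. For the other,
Goldstine's theorem is replaced by a direct estimate: if `F ∈ B_{X**}` satisfies
`F f > 1 - α/2` and `F g > 1 - η/2`, then `F (η f + α g) > η + α - αη`, so some `x ∈ B_X`
does as well, and as `f x, g x ≤ 1` this forces `f x > 1 - α` and `g x > 1 - η`. Now take
`F = ∑ λᵢ Fᵢ`, `G = ∑ λᵢ Gᵢ` in a convex combination of weak-star slices with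
`‖F - G‖ > 2 - δ` and `g ∈ B_{X*}` with `(F - G) g > 2 - δ`: for small `δ` every `Fᵢ`
lies deep in the weak-star slice of `g` and every `Gᵢ` in that of `-g`, and the points of
`B_X` obtained above give two elements of the convex combination of slices at distance
almost `2`.
-/

open Topology

theorem one_sub_lt_of_two_sub_lt_sum {n : ℕ} {lam a b : Fin n → ℝ} (hlam : ∀ i, 0 < lam i)
    (hsum : ∑ i, lam i = 1) (ha : ∀ i, a i ≤ 1) (hb : ∀ i, b i ≤ 1) {δ η : ℝ}
    (hδ : ∀ i, δ ≤ lam i * η) (h : 2 - δ < ∑ i, lam i * (a i + b i)) (j : Fin n) :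
    1 - η < a j ∧ 1 - η < b j := by
  have hdefect : ∑ i, lam i * ((1 - a i) + (1 - b i)) < δ := by
    have : ∑ i, lam i * ((1 - a i) + (1 - b i)) = 2 * ∑ i, lam i - ∑ i, lam i * (a i + b i) := by
      rw [Finset.mul_sum, ← Finset.sum_sub_distrib]
      exact Finset.sum_congr rfl fun i _ => by ring
    rw [this, hsum]
    linarith
  have hterm : lam j * ((1 - a j) + (1 - b j)) < lam j * η :=
    ((Finset.single_le_sum (f := fun i => lam i * ((1 - a i) + (1 - b i)))
      (fun i _ => mul_nonneg (hlam i).le (by linarith [ha i, hb i])) (Finset.mem_univ j)).trans_lt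
      hdefect).trans_le (hδ j)
  have := lt_of_mul_lt_mul_left hterm (hlam j).le
  constructor <;> linarith [ha j, hb j]

section Convex

variable {E : Type*} [AddCommGroup E] [Module ℝ E] {n : ℕ}

theorem Convex.ccomb_subset {C : Set E} (hC : Convex ℝ C) {lam : Fin n → ℝ}
    (hlam : ∀ i, 0 ≤ lam i) (hsum : ∑ i, lam i = 1) {S : Fin n → Set E} (hS : ∀ i, S i ⊆ C) :
    ccomb lam S ⊆ C := by
  rintro _ ⟨v, hv, rfl⟩
  exact hC.sum_mem (fun i _ => hlam i) hsum fun i _ => hS i (hv i)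

theorem ccomb_mapsTo {F : Type*} [AddCommGroup F] [Module ℝ F] (L : E →ₗ[ℝ] F)
    (lam : Fin n → ℝ) {S : Fin n → Set E} {T : Fin n → Set F} (h : ∀ i, Set.MapsTo L (S i) (T i)) :
    Set.MapsTo L (ccomb lam S) (ccomb lam T) := by
  rintro _ ⟨v, hv, rfl⟩
  exact ⟨fun i => L (v i), fun i => h i (hv i), by simp⟩

end Convex

section Normed

variable {E : Type*} [NormedAddCommGroup E] [NormedSpace ℝ E] {n : ℕ}

theorem isBounded_ccomb {lam : Fin n → ℝ} (hlam : ∀ i, 0 ≤ lam i) (hsum : ∑ i, lam i = 1)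
    {S : Fin n → Set E} (hS : ∀ i, S i ⊆ closedBall 0 1) : Bornology.IsBounded (ccomb lam S) :=
  isBounded_closedBall.subset ((convex_closedBall 0 1).ccomb_subset hlam hsum hS)

theorem diam_ccomb_le_two {lam : Fin n → ℝ} (hlam : ∀ i, 0 ≤ lam i) (hsum : ∑ i, lam i = 1)
    {S : Fin n → Set E} (hS : ∀ i, S i ⊆ closedBall 0 1) : diam (ccomb lam S) ≤ 2 := by
  have hsub := (convex_closedBall (0 : E) 1).ccomb_subset hlam hsum hS
  calc diam (ccomb lam S) ≤ diam (closedBall (0 : E) 1) := diam_mono hsub isBounded_closedBall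
    _ ≤ 2 * 1 := diam_closedBall zero_le_one
    _ = 2 := mul_one 2

theorem StrongDual.apply_le_norm {φ : StrongDual ℝ E} (hφ : ‖φ‖ ≤ 1) (x : E) : φ x ≤ ‖x‖ :=
  calc φ x ≤ ‖φ x‖ := le_abs_self _
    _ ≤ ‖φ‖ * ‖x‖ := φ.le_opNorm x
    _ ≤ ‖x‖ := mul_le_of_le_one_left (norm_nonneg x) hφ

theorem StrongDual.exists_norm_le_one_lt_apply (φ : StrongDual ℝ E) {r : ℝ} (hr : r < ‖φ‖) :
    ∃ x : E, ‖x‖ ≤ 1 ∧ r < φ x := by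
  obtain ⟨x, hx, hrx⟩ := φ.exists_lt_apply_of_lt_opNorm hr
  rcases le_or_gt 0 (φ x) with hpos | hneg
  · exact ⟨x, hx.le, by rwa [Real.norm_of_nonneg hpos] at hrx⟩
  · exact ⟨-x, by simpa using hx.le, by rwa [Real.norm_of_nonpos hneg.le, ← map_neg] at hrx⟩

end Normed

section Slices

variable {X : Type*} [NormedAddCommGroup X] [NormedSpace ℝ X] {n : ℕ}

theorem ballSlice_subset_closedBall (f : StrongDual ℝ X) (α : ℝ) :
    ballSlice f α ⊆ closedBall 0 1 :=
  fun _ hx => mem_closedBall_zero_iff.2 hx.1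

theorem biSlice_subset_closedBall (f : StrongDual ℝ X) (α : ℝ) :
    biSlice f α ⊆ closedBall 0 1 :=
  fun F hF => (mem_closedBall_zero_iff (E := StrongDual ℝ (StrongDual ℝ X)) (a := F)).2 hF.1

theorem convex_ballSlice (f : StrongDual ℝ X) (α : ℝ) : Convex ℝ (ballSlice f α) := by
  convert (convex_closedBall (0 : X) 1).inter
    ((convex_Ioi (1 - α)).linear_preimage f.toLinearMap) using 1
  ext x
  simp [ballSlice]

theorem mapsTo_inclusionInDoubleDual_ballSlice (f : StrongDual ℝ X) (α : ℝ) :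
    Set.MapsTo (NormedSpace.inclusionInDoubleDualLi ℝ) (ballSlice f α) (biSlice f α) :=
  fun x hx => ⟨(LinearIsometry.norm_map _ x).trans_le hx.1, hx.2⟩

theorem diam_ccomb_ballSlice_le_diam_ccomb_biSlice {lam : Fin n → ℝ} (hlam : ∀ i, 0 ≤ lam i)
    (hsum : ∑ i, lam i = 1) (f : Fin n → StrongDual ℝ X) (α : Fin n → ℝ) :
    diam (ccomb lam fun i => ballSlice (f i) (α i)) ≤
      diam (ccomb lam fun i => biSlice (f i) (α i)) := by
  have hmaps := ccomb_mapsTo (NormedSpace.inclusionInDoubleDualLi ℝ (E := X)).toLinearMap lam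
    fun i => mapsTo_inclusionInDoubleDual_ballSlice (f i) (α i)
  have hbdd := isBounded_ccomb (E := StrongDual ℝ (StrongDual ℝ X)) hlam hsum
    fun i => biSlice_subset_closedBall (f i) (α i)
  calc diam (ccomb lam fun i => ballSlice (f i) (α i))
      = diam (NormedSpace.inclusionInDoubleDualLi ℝ '' ccomb lam fun i => ballSlice (f i) (α i)) :=
        ((NormedSpace.inclusionInDoubleDualLi ℝ).isometry.diam_image _).symm
    _ ≤ _ := diam_mono hmaps.image_subset hbdd

theorem ballSlice_inter_nonempty_of_mem_biSlice {f g : StrongDual ℝ X} (hf : ‖f‖ ≤ 1)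
    (hg : ‖g‖ ≤ 1) {α η : ℝ} (hα : 0 < α) (hη : 0 < η) {F : StrongDual ℝ (StrongDual ℝ X)}
    (hFf : F ∈ biSlice f (α / 2)) (hFg : F ∈ biSlice g (η / 2)) :
    (ballSlice f α ∩ ballSlice g η).Nonempty := by
  set h := η • f + α • g
  have hFh : η + α - α * η < F h := by
    have : F h = η * F f + α * F g := by simp [h]
    nlinarith [hFf.2, hFg.2]
  obtain ⟨x, hx, hhx⟩ := h.exists_norm_le_one_lt_apply (hFh.trans_le (F.apply_le_norm hFf.1 h))
  have hfx : f x ≤ 1 := (f.apply_le_norm hf x).trans hx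
  have hgx : g x ≤ 1 := (g.apply_le_norm hg x).trans hx
  have hhx' : h x = η * f x + α * g x := by simp [h]
  refine ⟨x, ⟨hx, ?_⟩, hx, ?_⟩
  · nlinarith [mul_le_mul_of_nonneg_left hgx hα.le]
  · nlinarith [mul_le_mul_of_nonneg_left hfx hη.le]

theorem two_sub_two_mul_lt_norm_sub {lam : Fin n → ℝ} (hlam : ∀ i, 0 ≤ lam i)
    (hsum : ∑ i, lam i = 1) {g : StrongDual ℝ X} (hg : ‖g‖ ≤ 1) {η : ℝ} {x y : Fin n → X}
    (hx : ∀ i, x i ∈ ballSlice g η) (hy : ∀ i, y i ∈ ballSlice (-g) η) :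
    2 - 2 * η < ‖∑ i, lam i • x i - ∑ i, lam i • y i‖ := by
  have hgx := ((convex_ballSlice g η).ccomb_subset hlam hsum fun _ => subset_rfl) ⟨x, hx, rfl⟩
  have hgy := ((convex_ballSlice (-g) η).ccomb_subset hlam hsum fun _ => subset_rfl) ⟨y, hy, rfl⟩
  calc 2 - 2 * η < g (∑ i, lam i • x i) - g (∑ i, lam i • y i) := by
        linarith [hgx.2, neg_apply g (∑ i, lam i • y i) ▸ hgy.2]
    _ = g (∑ i, lam i • x i - ∑ i, lam i • y i) := (map_sub g _ _).symm
    _ ≤ _ := g.apply_le_norm hg _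

theorem diam_ccomb_ballSlice_eq_two {lam : Fin n → ℝ} (hlam : ∀ i, 0 < lam i)
    (hsum : ∑ i, lam i = 1) {f : Fin n → StrongDual ℝ X} (hf : ∀ i, ‖f i‖ ≤ 1) {α : Fin n → ℝ}
    (hα : ∀ i, 0 < α i) (hbi : diam (ccomb lam fun i => biSlice (f i) (α i / 2)) = 2) :
    diam (ccomb lam fun i => ballSlice (f i) (α i)) = 2 := by
  refine le_antisymm (diam_ccomb_le_two (fun i => (hlam i).le) hsum
    fun i => ballSlice_subset_closedBall _ _) (le_of_forall_pos_lt_add fun ε hε => ?_)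
  obtain ⟨η, hη, rfl⟩ : ∃ η > 0, ε = 2 * η := ⟨ε / 2, by positivity, by ring⟩
  obtain ⟨δ, ⟨hδlam, hδ2⟩, hδ⟩ : ∃ δ, ((∀ i, δ < lam i * (η / 2)) ∧ δ < 2) ∧ 0 < δ :=
    (((Filter.eventually_all.2 fun i => eventually_lt_nhds
      (mul_pos (hlam i) (by positivity))).and (eventually_lt_nhds two_pos)).filter_mono
      nhdsWithin_le_nhds).and self_mem_nhdsWithin |>.exists (f := 𝓝[>] (0 : ℝ))
  obtain ⟨_, ⟨Fv, hFv, rfl⟩, _, ⟨Gv, hGv, rfl⟩, hFG⟩ :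
      ∃ F ∈ ccomb lam fun i => biSlice (f i) (α i / 2),
        ∃ G ∈ ccomb lam fun i => biSlice (f i) (α i / 2), 2 - δ < dist F G := by
    by_contra! hle
    linarith [diam_le_of_forall_dist_le (by linarith) hle]
  obtain ⟨g, hg, hgap⟩ := StrongDual.exists_norm_le_one_lt_apply _
    (hFG.trans_eq (dist_eq_norm (E := StrongDual ℝ (StrongDual ℝ X)) _ _))
  have hgap' : 2 - δ < ∑ i, lam i * (Fv i g + Gv i (-g)) := by
    simpa [mul_sub, Finset.sum_sub_distrib, ← sub_eq_add_neg] using hgap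
  have hg' : ‖-g‖ ≤ 1 := (norm_neg g).trans_le hg
  have hnear := one_sub_lt_of_two_sub_lt_sum hlam hsum
    (fun i => ((hFv i).1 |> StrongDual.apply_le_norm) g |>.trans hg)
    (fun i => ((hGv i).1 |> StrongDual.apply_le_norm) (-g) |>.trans hg')
    (fun i => (hδlam i).le) hgap'
  choose x hx using fun i => ballSlice_inter_nonempty_of_mem_biSlice (hf i) hg (hα i)
    (by positivity) (hFv i) ⟨(hFv i).1, (hnear i).1⟩
  choose y hy using fun i => ballSlice_inter_nonempty_of_mem_biSlice (hf i) hg' (hα i)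
    (by positivity) (hGv i) ⟨(hGv i).1, (hnear i).2⟩
  have hfar := two_sub_two_mul_lt_norm_sub (fun i => (hlam i).le) hsum hg (fun i => (hx i).2)
    (fun i => (hy i).2)
  have hdiam := dist_le_diam_of_mem
    (isBounded_ccomb (fun i => (hlam i).le) hsum fun i => ballSlice_subset_closedBall (f i) (α i))
    ⟨x, fun i => (hx i).1, rfl⟩ ⟨y, fun i => (hy i).1, rfl⟩
  rw [dist_eq_norm] at hdiam
  linarith

end Slices

theorem ccomb_slices_diam_two_iff_ccomb_wStarSlices_bidual_diam_two_general
    (X : Type*) [NormedAddCommGroup X] [NormedSpace ℝ X] :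
    (∀ (n : ℕ) (lam : Fin n → ℝ), (∀ i, 0 < lam i) → ∑ i, lam i = 1 →
      ∀ (f : Fin n → StrongDual ℝ X), (∀ i, ‖f i‖ = 1) →
      ∀ (α : Fin n → ℝ), (∀ i, α i ∈ Set.Ioo (0 : ℝ) 1) →
      Metric.diam (ccomb lam (fun i => ballSlice (f i) (α i))) = 2) ↔
    (∀ (n : ℕ) (lam : Fin n → ℝ), (∀ i, 0 < lam i) → ∑ i, lam i = 1 →
      ∀ (f : Fin n → StrongDual ℝ X), (∀ i, ‖f i‖ = 1) →
      ∀ (α : Fin n → ℝ), (∀ i, α i ∈ Set.Ioo (0 : ℝ) 1) →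
      Metric.diam (ccomb lam (fun i => biSlice (f i) (α i))) = 2) := by
  constructor
  · intro h n lam hlam hsum f hf α hα
    refine le_antisymm (diam_ccomb_le_two (E := StrongDual ℝ (StrongDual ℝ X))
      (fun i => (hlam i).le) hsum fun i => biSlice_subset_closedBall (f i) (α i)) ?_
    calc 2 = diam (ccomb lam fun i => ballSlice (f i) (α i)) := (h n lam hlam hsum f hf α hα).symm
      _ ≤ _ := diam_ccomb_ballSlice_le_diam_ccomb_biSlice (fun i => (hlam i).le) hsum f α
  · intro h n lam hlam hsum f hf α hα
    refine diam_ccomb_ballSlice_eq_two hlam hsum (fun i => (hf i).le) (fun i => (hα i).1) ?_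
    exact h n lam hlam hsum f hf (fun i => α i / 2) fun i =>
      ⟨by linarith [(hα i).1], by linarith [(hα i).2]⟩

theorem ccomb_slices_diam_two_iff_ccomb_wStarSlices_bidual_diam_two
    (X : Type*) [NormedAddCommGroup X] [NormedSpace ℝ X] [CompleteSpace X] :
    (∀ (n : ℕ) (lam : Fin n → ℝ), (∀ i, 0 < lam i) → ∑ i, lam i = 1 →
      ∀ (f : Fin n → StrongDual ℝ X), (∀ i, ‖f i‖ = 1) →
      ∀ (α : Fin n → ℝ), (∀ i, α i ∈ Set.Ioo (0 : ℝ) 1) →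
      Metric.diam (ccomb lam (fun i => ballSlice (f i) (α i))) = 2) ↔
    (∀ (n : ℕ) (lam : Fin n → ℝ), (∀ i, 0 < lam i) → ∑ i, lam i = 1 →
      ∀ (f : Fin n → StrongDual ℝ X), (∀ i, ‖f i‖ = 1) →
      ∀ (α : Fin n → ℝ), (∀ i, α i ∈ Set.Ioo (0 : ℝ) 1) →
      Metric.diam (ccomb lam (fun i => biSlice (f i) (α i))) = 2) :=
  ccomb_slices_diam_two_iff_ccomb_wStarSlices_bidual_diam_two_general X
end
end
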